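/- For a real two-qubit X-state density matrix ρ (i.e. ρ_{12}=ρ_{13}=ρ_{24}=ρ_{34}=0, with entries ρ_{11}, ρ_{22}, ρ_{33}, ρ_{44}, ρ_{14}=ρ_{41}, ρ_{23}=ρ_{32}) with ρ_{22}=ρ_{33}, the concurrence is C(ρ) = 2 max(0, |ρ_{14}| - ρ_{22}, |ρ_{23}| - √(ρ_{11}ρ_{44})). -/

import Mathlib

open Complex
open scoped ComplexOrder

/-- The Pauli matrix σ_y. -/
def sy : Matrix (Fin 2) (Fin 2) ℂ := !![0, -I; I, 0]

/-- σ_y ⊗ σ_y on two qubits. -/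
def Y2 : Matrix (Fin 2 × Fin 2) (Fin 2 × Fin 2) ℂ :=
  fun p q => sy p.1 q.1 * sy p.2 q.2

/-- Wootters' matrix R = ρ (σ_y⊗σ_y) ρ* (σ_y⊗σ_y). -/
noncomputable def Rmat (ρ : Matrix (Fin 2 × Fin 2) (Fin 2 × Fin 2) ℂ) :
    Matrix (Fin 2 × Fin 2) (Fin 2 × Fin 2) ℂ :=
  ρ * Y2 * ρ.map (starRingEnd ℂ) * Y2

/-- Reindexing equivalence between two-qubit index pairs and `Fin 4`. -/
def e4 : Fin 2 × Fin 2 ≃ Fin 4 where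
  toFun p := ⟨2 * p.1.val + p.2.val, by omega⟩
  invFun i := (⟨i.val / 2, by omega⟩, ⟨i.val % 2, by omega⟩)
  left_inv := by decide
  right_inv := by decide

lemma he0 : e4 (0,0) = 0 := rfl
lemma he0' : e4 0 = 0 := rfl
lemma he1 : e4 (0,1) = 1 := rfl
lemma he2 : e4 (1,0) = 2 := rfl
lemma he3 : e4 (1,1) = 3 := rfl
lemma he3' : e4 1 = 3 := rfl

open Polynomial in
lemma charpoly_M4 (a b d w z s : ℝ) (hs : s^2 = a*d) :
    (!![((w^2+a*d : ℝ):ℂ), 0, 0, ((2*a*w:ℝ):ℂ);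
       0, ((z^2+b^2:ℝ):ℂ), ((2*b*z:ℝ):ℂ), 0;
       0, ((2*b*z:ℝ):ℂ), ((z^2+b^2:ℝ):ℂ), 0;
       ((2*d*w:ℝ):ℂ), 0, 0, ((w^2+a*d:ℝ):ℂ)]).charpoly
    = ((X - C (((w+s)^2:ℝ):ℂ)) * (X - C (((w-s)^2:ℝ):ℂ)))
      * ((X - C (((z+b)^2:ℝ):ℂ)) * (X - C (((z-b)^2:ℝ):ℂ))) := by
  have hs' : ((s:ℂ))^2 = (a:ℂ)*(d:ℂ) := by norm_cast
  rw [Matrix.charpoly]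
  have hcm : (!![((w^2+a*d : ℝ):ℂ), 0, 0, ((2*a*w:ℝ):ℂ);
       0, ((z^2+b^2:ℝ):ℂ), ((2*b*z:ℝ):ℂ), 0;
       0, ((2*b*z:ℝ):ℂ), ((z^2+b^2:ℝ):ℂ), 0;
       ((2*d*w:ℝ):ℂ), 0, 0, ((w^2+a*d:ℝ):ℂ)]).charmatrix
      = !![X - C (((w^2+a*d : ℝ):ℂ)), 0, 0, -C ((2*a*w:ℝ):ℂ);
           0, X - C ((z^2+b^2:ℝ):ℂ), -C ((2*b*z:ℝ):ℂ), 0;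
           0, -C ((2*b*z:ℝ):ℂ), X - C ((z^2+b^2:ℝ):ℂ), 0;
           -C ((2*d*w:ℝ):ℂ), 0, 0, X - C ((w^2+a*d:ℝ):ℂ)] := by
    ext i j
    fin_cases i <;> fin_cases j <;>
      simp [Matrix.charmatrix_apply, Matrix.diagonal]
  rw [hcm]
  simp [Matrix.det_succ_row_zero, Fin.sum_univ_succ,
    show ((2:Fin 3).castSucc : Fin 4) = 2 from rfl,
    show ((1:Fin 3).castSucc : Fin 4) = 1 from rfl,
    show ((0:Fin 3).castSucc : Fin 4) = 0 from rfl,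
    show ((1:Fin 2).castSucc : Fin 3) = 1 from rfl,
    show ((0:Fin 2).castSucc : Fin 3) = 0 from rfl,
    show ((0:Fin 1).castSucc : Fin 2) = 0 from rfl,
    show (Fin.succAbove (3:Fin 4) (2:Fin 3)) = 2 from rfl,
    show (Fin.succAbove (3:Fin 4) (1:Fin 3)) = 1 from rfl,
    show (Fin.succAbove (3:Fin 4) (0:Fin 3)) = 0 from rfl,
    show (Fin.succAbove (2:Fin 4) (2:Fin 3)) = 3 from rfl,
    show (Fin.succAbove (1:Fin 4) (2:Fin 3)) = 3 from rfl,
    show (Fin.succAbove (2:Fin 3) (1:Fin 2)) = 1 from rfl,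
    show (Fin.succAbove (1:Fin 3) (1:Fin 2)) = 2 from rfl]
  push_cast
  simp only [map_add, map_sub, map_mul, map_pow, map_ofNat, map_neg, map_one]
  have hC : (C ((s:ℂ)))^2 = C ((a:ℂ)) * C ((d:ℂ)) := by
    rw [← map_pow, ← map_mul, hs']
  linear_combination (((X - C ((z:ℂ))^2 - C ((b:ℂ))^2)^2 - 4*C ((b:ℂ))^2*C ((z:ℂ))^2)
    * (2*X + 2*C ((w:ℂ))^2 - C ((a:ℂ))*C ((d:ℂ)) - C ((s:ℂ))^2)) * hC

set_option maxHeartbeats 2000000 in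
/-- For a real two-qubit X-state density matrix ρ with ρ₂₂ = ρ₃₃,
ρ₁₄ = ρ₄₁, ρ₂₃ = ρ₃₂, the concurrence (defined via the decreasingly ordered
nonnegative square roots γ of the eigenvalues of R) satisfies
C(ρ) = 2 max(0, |ρ₁₄| - ρ₂₂, |ρ₂₃| - √(ρ₁₁ρ₄₄)). -/
theorem stmt18
    (ρ : Matrix (Fin 2 × Fin 2) (Fin 2 × Fin 2) ℂ)
    (hreal : ∀ p q, (ρ p q).im = 0)
    (hX : ρ (0,0) (0,1) = 0 ∧ ρ (0,0) (1,0) = 0 ∧ ρ (0,1) (0,0) = 0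
      ∧ ρ (0,1) (1,1) = 0 ∧ ρ (1,0) (0,0) = 0 ∧ ρ (1,0) (1,1) = 0
      ∧ ρ (1,1) (0,1) = 0 ∧ ρ (1,1) (1,0) = 0)
    (h2233 : ρ (0,1) (0,1) = ρ (1,0) (1,0))
    (h14 : ρ (0,0) (1,1) = ρ (1,1) (0,0))
    (h23 : ρ (0,1) (1,0) = ρ (1,0) (0,1))
    (hpsd : ρ.PosSemidef) (htr : Matrix.trace ρ = 1)
    (γ : Fin 4 → ℝ) (hmono : Antitone γ) (hnn : ∀ i, 0 ≤ γ i)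
    (hroots : (Finset.univ.val.map fun i => ((γ i : ℂ)) ^ 2) = (Rmat ρ).charpoly.roots) :
    max (γ 0 - γ 1 - γ 2 - γ 3) 0
      = 2 * max 0 (max (|(ρ (0,0) (1,1)).re| - (ρ (0,1) (0,1)).re)
          (|(ρ (0,1) (1,0)).re|
            - Real.sqrt ((ρ (0,0) (0,0)).re * (ρ (1,1) (1,1)).re))) := by
  classical
  obtain ⟨hx1, hx2, hx3, hx4, hx5, hx6, hx7, hx8⟩ := hX
  have key : ∀ p q, ρ p q = ((ρ p q).re : ℂ) :=
    fun p q => Complex.ext (by simp) (by simp [hreal p q])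
  set a := (ρ (0,0) (0,0)).re with ha_def
  set b := (ρ (0,1) (0,1)).re with hb_def
  set d := (ρ (1,1) (1,1)).re with hd_def
  set w := (ρ (0,0) (1,1)).re with hw_def
  set z := (ρ (0,1) (1,0)).re with hz_def
  set s := Real.sqrt (a * d) with hs_def
  -- entry lemmas (indices in `Prod`-normalized form where relevant)
  have hA : ρ 0 0 = (a:ℂ) := key (0,0) (0,0)
  have hB : ρ (0,1) (0,1) = (b:ℂ) := key (0,1) (0,1)
  have hB' : ρ (1,0) (1,0) = (b:ℂ) := h2233 ▸ key (0,1) (0,1)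
  have hD : ρ 1 1 = (d:ℂ) := key (1,1) (1,1)
  have hW : ρ 0 1 = (w:ℂ) := key (0,0) (1,1)
  have hW' : ρ 1 0 = (w:ℂ) := h14 ▸ key (0,0) (1,1)
  have hZ : ρ (0,1) (1,0) = (z:ℂ) := key (0,1) (1,0)
  have hZ' : ρ (1,0) (0,1) = (z:ℂ) := h23 ▸ key (0,1) (1,0)
  have hx1' : ρ 0 (0,1) = 0 := hx1
  have hx2' : ρ 0 (1,0) = 0 := hx2
  have hx3' : ρ (0,1) 0 = 0 := hx3
  have hx4' : ρ (0,1) 1 = 0 := hx4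
  have hx5' : ρ (1,0) 0 = 0 := hx5
  have hx6' : ρ (1,0) 1 = 0 := hx6
  have hx7' : ρ 1 (0,1) = 0 := hx7
  have hx8' : ρ 1 (1,0) = 0 := hx8
  have hmap : ρ.map (starRingEnd ℂ) = ρ := by
    ext p q
    exact Complex.conj_eq_iff_im.mpr (hreal p q)
  -- positivity facts
  have quad1 : ∀ t : ℝ, 0 ≤ a * (t*t) + (2*w) * t + d := by
    intro t
    have h := hpsd.dotProduct_mulVec_nonneg (fun r => if r = (0,0) then (t:ℂ) else if r = (1,1) then 1 else 0)
    simp [dotProduct, Matrix.mulVec, Fintype.sum_prod_type, Fin.sum_univ_two,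
      Prod.ext_iff, hA, hD, hW, hW', show ρ (0,0) (0,0) = (a:ℂ) from hA,
      show ρ (1,1) (1,1) = (d:ℂ) from hD, show ρ (0,0) (1,1) = (w:ℂ) from hW,
      show ρ (1,1) (0,0) = (w:ℂ) from hW'] at h
    have h2 := (Complex.le_def.mp h).1
    simp at h2
    nlinarith [h2]
  have quad2 : ∀ t : ℝ, 0 ≤ b * (t*t) + (2*z) * t + b := by
    intro t
    have h := hpsd.dotProduct_mulVec_nonneg (fun r => if r = (0,1) then (t:ℂ) else if r = (1,0) then 1 else 0)
    simp [dotProduct, Matrix.mulVec, Fintype.sum_prod_type, Fin.sum_univ_two,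
      Prod.ext_iff, hB, hB', hZ, hZ'] at h
    have h2 := (Complex.le_def.mp h).1
    simp at h2
    nlinarith [h2]
  have ha : 0 ≤ a := by
    have h := hpsd.dotProduct_mulVec_nonneg (fun r => if r = (0,0) then 1 else 0)
    simp [dotProduct, Matrix.mulVec, Fintype.sum_prod_type, Fin.sum_univ_two,
      Prod.ext_iff, hA, show ρ (0,0) (0,0) = (a:ℂ) from hA] at h
    exact h
  have hd : 0 ≤ d := by simpa using quad1 0
  have hb : 0 ≤ b := by simpa using quad2 0
  have hwad : w^2 ≤ a*d := by
    have h := discrim_le_zero quad1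
    simp [discrim] at h
    nlinarith [h]
  have hzb2 : z^2 ≤ b^2 := by
    have h := discrim_le_zero quad2
    simp [discrim] at h
    nlinarith [h]
  have hs2 : s^2 = a*d := Real.sq_sqrt (by positivity)
  have hws : |w| ≤ s := by
    rw [← Real.sqrt_sq_eq_abs, hs_def]
    exact Real.sqrt_le_sqrt hwad
  have hzb : |z| ≤ b := by
    have : |z| ≤ |b| := by
      rw [← Real.sqrt_sq_eq_abs, ← Real.sqrt_sq_eq_abs]
      exact Real.sqrt_le_sqrt hzb2
    rwa [_root_.abs_of_nonneg hb] at this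
  have hw1 : -s ≤ w := (abs_le.mp hws).1
  have hw2 : w ≤ s := (abs_le.mp hws).2
  have hz1 : -b ≤ z := (abs_le.mp hzb).1
  have hz2 : z ≤ b := (abs_le.mp hzb).2
  -- charpoly
  have hPY : ρ * Y2 = Matrix.reindex e4.symm e4.symm
      !![(-(w:ℂ)), 0, 0, (-(a:ℂ)); 0, (z:ℂ), (b:ℂ), 0;
         0, (b:ℂ), (z:ℂ), 0; (-(d:ℂ)), 0, 0, (-(w:ℂ))] := by
    ext p q
    fin_cases p <;> fin_cases q <;>
      simp [Y2, sy, Matrix.mul_apply, Fintype.sum_prod_type, Fin.sum_univ_two,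
        he0, he0', he1, he2, he3, he3', hA, hB, hB', hD, hW, hW', hZ, hZ',
        hx1', hx2', hx3', hx4', hx5', hx6', hx7', hx8', hx1, hx2, hx3, hx4, hx5, hx6, hx7, hx8,
        show ρ (0,0) (0,0) = (a:ℂ) from hA, show ρ (1,1) (1,1) = (d:ℂ) from hD,
        show ρ (0,0) (1,1) = (w:ℂ) from hW, show ρ (1,1) (0,0) = (w:ℂ) from hW']
  have hsq : (!![(-(w:ℂ)), 0, 0, (-(a:ℂ)); 0, (z:ℂ), (b:ℂ), 0;
        0, (b:ℂ), (z:ℂ), 0; (-(d:ℂ)), 0, 0, (-(w:ℂ))] *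
      !![(-(w:ℂ)), 0, 0, (-(a:ℂ)); 0, (z:ℂ), (b:ℂ), 0;
        0, (b:ℂ), (z:ℂ), 0; (-(d:ℂ)), 0, 0, (-(w:ℂ))]) =
      !![((w^2+a*d : ℝ):ℂ), 0, 0, ((2*a*w:ℝ):ℂ);
         0, ((z^2+b^2:ℝ):ℂ), ((2*b*z:ℝ):ℂ), 0;
         0, ((2*b*z:ℝ):ℂ), ((z^2+b^2:ℝ):ℂ), 0;
         ((2*d*w:ℝ):ℂ), 0, 0, ((w^2+a*d:ℝ):ℂ)] := by
    ext i j
    fin_cases i <;> fin_cases j <;>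
      simp [Matrix.mul_apply, Fin.sum_univ_four] <;> push_cast <;> ring
  have hRR : Rmat ρ = Matrix.reindex e4.symm e4.symm
      !![((w^2+a*d : ℝ):ℂ), 0, 0, ((2*a*w:ℝ):ℂ);
         0, ((z^2+b^2:ℝ):ℂ), ((2*b*z:ℝ):ℂ), 0;
         0, ((2*b*z:ℝ):ℂ), ((z^2+b^2:ℝ):ℂ), 0;
         ((2*d*w:ℝ):ℂ), 0, 0, ((w^2+a*d:ℝ):ℂ)] := by
    have h1 : Rmat ρ = (ρ * Y2) * (ρ * Y2) := by
      simp only [Rmat, hmap, Matrix.mul_assoc]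
    rw [h1, hPY, ← hsq]
    simp only [Matrix.reindex_apply]
    rw [Matrix.submatrix_mul_equiv]
  have hcp : (Rmat ρ).charpoly
      = ((Polynomial.X - Polynomial.C (((w+s)^2:ℝ):ℂ))
          * (Polynomial.X - Polynomial.C (((w-s)^2:ℝ):ℂ)))
        * ((Polynomial.X - Polynomial.C (((z+b)^2:ℝ):ℂ))
          * (Polynomial.X - Polynomial.C (((z-b)^2:ℝ):ℂ))) := by
    rw [hRR, Matrix.charpoly_reindex]
    exact charpoly_M4 a b d w z s hs2
  -- roots
  have hroots2 : (Rmat ρ).charpoly.roots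
      = {(((w+s)^2:ℝ):ℂ), (((w-s)^2:ℝ):ℂ), (((z+b)^2:ℝ):ℂ), (((z-b)^2:ℝ):ℂ)} := by
    rw [hcp]
    rw [Polynomial.roots_mul (mul_ne_zero
        (mul_ne_zero (Polynomial.X_sub_C_ne_zero _) (Polynomial.X_sub_C_ne_zero _))
        (mul_ne_zero (Polynomial.X_sub_C_ne_zero _) (Polynomial.X_sub_C_ne_zero _))),
      Polynomial.roots_mul (mul_ne_zero (Polynomial.X_sub_C_ne_zero _)
        (Polynomial.X_sub_C_ne_zero _)),
      Polynomial.roots_mul (mul_ne_zero (Polynomial.X_sub_C_ne_zero _)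
        (Polynomial.X_sub_C_ne_zero _))]
    simp only [Polynomial.roots_X_sub_C]
    simp only [Multiset.insert_eq_cons, Multiset.singleton_add, Multiset.cons_add,
      Multiset.add_cons]
    rw [Multiset.cons_swap]
    exact congrArg _ (Multiset.cons_swap _ _ _)
  have huniv : (Finset.univ.val : Multiset (Fin 4)) = {0, 1, 2, 3} := rfl
  have hCms : ({((γ 0:ℂ))^2, ((γ 1:ℂ))^2, ((γ 2:ℂ))^2, ((γ 3:ℂ))^2} : Multiset ℂ)
      = {(((w+s)^2:ℝ):ℂ), (((w-s)^2:ℝ):ℂ), (((z+b)^2:ℝ):ℂ), (((z-b)^2:ℝ):ℂ)} := by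
    rw [← hroots2, ← hroots, huniv]
    simp
  have hRms : ({(γ 0)^2, (γ 1)^2, (γ 2)^2, (γ 3)^2} : Multiset ℝ)
      = {(w+s)^2, (w-s)^2, (z+b)^2, (z-b)^2} := by
    apply Multiset.map_injective Complex.ofReal_injective
    simpa [push_cast] using hCms
  have hγm : ({γ 0, γ 1, γ 2, γ 3} : Multiset ℝ) = {s+w, s-w, b+z, b-z} := by
    have h := congrArg (Multiset.map Real.sqrt) hRms
    have e1 : Real.sqrt ((w+s)^2) = s+w := by
      rw [show (w+s)^2 = (s+w)^2 by ring]; exact Real.sqrt_sq (by linarith)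
    have e2 : Real.sqrt ((w-s)^2) = s-w := by
      rw [show (w-s)^2 = (s-w)^2 by ring]; exact Real.sqrt_sq (by linarith)
    have e3 : Real.sqrt ((z+b)^2) = b+z := by
      rw [show (z+b)^2 = (b+z)^2 by ring]; exact Real.sqrt_sq (by linarith)
    have e4' : Real.sqrt ((z-b)^2) = b-z := by
      rw [show (z-b)^2 = (b-z)^2 by ring]; exact Real.sqrt_sq (by linarith)
    simpa [Real.sqrt_sq (hnn 0), Real.sqrt_sq (hnn 1), Real.sqrt_sq (hnn 2),
      Real.sqrt_sq (hnn 3), e1, e2, e3, e4'] using h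
  -- extract sum and max
  have hsum : γ 0 + γ 1 + γ 2 + γ 3 = 2*s + 2*b := by
    have h := congrArg Multiset.sum hγm
    simp only [Multiset.insert_eq_cons, Multiset.sum_cons, Multiset.sum_singleton] at h
    linarith
  have hmem : γ 0 ∈ ({s+w, s-w, b+z, b-z} : Multiset ℝ) := by
    rw [← hγm]; simp
  have hub : ∀ x ∈ ({s+w, s-w, b+z, b-z} : Multiset ℝ), x ≤ γ 0 := by
    intro x hx
    rw [← hγm] at hx
    simp only [Multiset.insert_eq_cons, Multiset.mem_cons, Multiset.mem_singleton] at hx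
    rcases hx with h|h|h|h <;> rw [h] <;> exact hmono (Fin.zero_le _)
  have hmax : γ 0 = max (s+w) (max (s-w) (max (b+z) (b-z))) := by
    apply le_antisymm
    · simp only [Multiset.insert_eq_cons, Multiset.mem_cons, Multiset.mem_singleton] at hmem
      rcases hmem with h|h|h|h <;> rw [h] <;>
        simp [le_max_iff, le_refl, true_or, or_true]
    · simp only [max_le_iff]
      exact ⟨hub _ (by simp), hub _ (by simp), hub _ (by simp), hub _ (by simp)⟩
  have hdiff : γ 0 - γ 1 - γ 2 - γ 3
      = 2 * (max (s+w) (max (s-w) (max (b+z) (b-z)))) - 2*s - 2*b := by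
    rw [← hmax]; linarith
  rw [hdiff]
  rcases abs_cases w with ⟨hc1, hc2⟩ | ⟨hc1, hc2⟩ <;>
    rcases abs_cases z with ⟨hc3, hc4⟩ | ⟨hc3, hc4⟩ <;>
    rw [hc1, hc3] <;>
    simp only [max_def] <;> split_ifs <;> linarith
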